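/- Let n ≥ 1. There exist constants C, c > 0 such that |t ∂_t W_t^H(x,y)| ≤ C e^{-c(|x|+|y|)|x-y|} e^{-c|x-y|²/t} t^{-n/2} for all x, y ∈ ℝ^n and all t > 0, where W_t^H is the Hermite heat kernel on ℝ^n and ∂_t is the derivative in t. -/

import Mathlib

open MeasureTheory Real Set Filter
open scoped ENNReal NNReal

noncomputable section

/-- `N` is a norm on the real normed space `B`. -/
def IsNormOn {B : Type*} [NormedAddCommGroup B] [NormedSpace ℝ B] (N : B → ℝ) : Prop :=
  (∀ x y : B, N (x + y) ≤ N x + N y) ∧ ∀ (c : ℝ) (x : B), N (c • x) = |c| * N x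

/-- `N` is equivalent to the given norm of `B`. -/
def EquivToNorm {B : Type*} [NormedAddCommGroup B] (N : B → ℝ) : Prop :=
  ∃ c₁ c₂ : ℝ, 0 < c₁ ∧ 0 < c₂ ∧ ∀ x : B, c₁ * ‖x‖ ≤ N x ∧ N x ≤ c₂ * ‖x‖

/-- `N` is a `q`-uniformly convex norm: `δ_N(ε) ≥ K ε^q`. -/
def QUnifConvexNorm {B : Type*} [NormedAddCommGroup B] [NormedSpace ℝ B]
    (q : ℝ) (N : B → ℝ) : Prop :=
  ∃ K : ℝ, 0 < K ∧ ∀ ε : ℝ, 0 < ε → ε < 2 → ∀ a b : B,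
    N a = 1 → N b = 1 → N (a - b) = ε → K * ε ^ q ≤ 1 - N ((2⁻¹ : ℝ) • (a + b))

/-- `N` is a `q`-uniformly smooth norm: `ρ_N(t) ≤ K t^q`. -/
def QUnifSmoothNorm {B : Type*} [NormedAddCommGroup B] [NormedSpace ℝ B]
    (q : ℝ) (N : B → ℝ) : Prop :=
  ∃ K : ℝ, 0 < K ∧ ∀ t : ℝ, 0 < t → ∀ a b : B,
    N a = 1 → N b = 1 → (N (a + t • b) + N (a - t • b)) / 2 - 1 ≤ K * t ^ q

/-- Weyl fractional derivative of order `α`, using `m = ⌊α⌋ + 1` derivatives. -/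
def weylDeriv {B : Type*} [NormedAddCommGroup B] [NormedSpace ℝ B]
    (α : ℝ) (φ : ℝ → B) (t : ℝ) : B :=
  (Real.Gamma (((⌊α⌋₊ : ℝ) + 1) - α))⁻¹ •
    ∫ u in Ioi t, ((u - t) ^ (((⌊α⌋₊ : ℝ) + 1) - α - 1)) • iteratedDeriv (⌊α⌋₊ + 1) φ u

/-- Absolute convergence of the integral defining the Weyl derivative of order `α` at `t`. -/
def WeylIntegrable {B : Type*} [NormedAddCommGroup B] [NormedSpace ℝ B]
    (α : ℝ) (φ : ℝ → B) (t : ℝ) : Prop :=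
  IntegrableOn
    (fun u => ((u - t) ^ (((⌊α⌋₊ : ℝ) + 1) - α - 1)) • iteratedDeriv (⌊α⌋₊ + 1) φ u)
    (Ioi t) volume

/-- The classical heat kernel on `ℝⁿ`. -/
def heatKernel (n : ℕ) (t : ℝ) (z : EuclideanSpace ℝ (Fin n)) : ℝ :=
  (4 * Real.pi * t) ^ (-(n : ℝ) / 2) * Real.exp (-‖z‖ ^ 2 / (4 * t))

/-- The classical heat semigroup on `ℝⁿ`, acting on `B`-valued functions. -/
def heatOp {B : Type*} [NormedAddCommGroup B] [NormedSpace ℝ B] (n : ℕ) (t : ℝ)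
    (f : EuclideanSpace ℝ (Fin n) → B) (x : EuclideanSpace ℝ (Fin n)) : B :=
  ∫ y, heatKernel n t (x - y) • f y

/-- The classical Poisson kernel on `ℝⁿ`. -/
def poissonKernelRn (n : ℕ) (t : ℝ) (z : EuclideanSpace ℝ (Fin n)) : ℝ :=
  Real.Gamma (((n : ℝ) + 1) / 2) / Real.pi ^ (((n : ℝ) + 1) / 2) *
    (t / (t ^ 2 + ‖z‖ ^ 2) ^ (((n : ℝ) + 1) / 2))

/-- The classical Poisson semigroup on `ℝⁿ`, acting on `B`-valued functions. -/
def poissonOp {B : Type*} [NormedAddCommGroup B] [NormedSpace ℝ B] (n : ℕ) (t : ℝ)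
    (f : EuclideanSpace ℝ (Fin n) → B) (x : EuclideanSpace ℝ (Fin n)) : B :=
  ∫ y, poissonKernelRn n t (x - y) • f y

/-- The Hermite heat kernel on `ℝⁿ`. -/
def hermiteKernel (n : ℕ) (t : ℝ) (x y : EuclideanSpace ℝ (Fin n)) : ℝ :=
  Real.pi ^ (-(n : ℝ) / 2) * (Real.exp (-2 * t) / (1 - Real.exp (-4 * t))) ^ ((n : ℝ) / 2) *
    Real.exp (-(1 / 4) *
      (‖x - y‖ ^ 2 * (1 + Real.exp (-2 * t)) / (1 - Real.exp (-2 * t)) +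
        ‖x + y‖ ^ 2 * (1 - Real.exp (-2 * t)) / (1 + Real.exp (-2 * t))))

/-- The Hermite heat semigroup on `ℝⁿ`, acting on `B`-valued functions. -/
def hermiteOp {B : Type*} [NormedAddCommGroup B] [NormedSpace ℝ B] (n : ℕ) (t : ℝ)
    (f : EuclideanSpace ℝ (Fin n) → B) (x : EuclideanSpace ℝ (Fin n)) : B :=
  ∫ y, hermiteKernel n t x y • f y

/-- The one-dimensional Hermite heat kernel. -/
def hermiteKernel1 (t x y : ℝ) : ℝ :=
  Real.pi ^ (-(1 : ℝ) / 2) * (Real.exp (-2 * t) / (1 - Real.exp (-4 * t))) ^ ((1 : ℝ) / 2) *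
    Real.exp (-(1 / 4) *
      ((x - y) ^ 2 * (1 + Real.exp (-2 * t)) / (1 - Real.exp (-2 * t)) +
        (x + y) ^ 2 * (1 - Real.exp (-2 * t)) / (1 + Real.exp (-2 * t))))

/-- The modified Bessel function of the first kind of order `β`. -/
def besselI (β z : ℝ) : ℝ :=
  ∑' m : ℕ, (z / 2) ^ (2 * (m : ℝ) + β) / ((Nat.factorial m : ℝ) * Real.Gamma ((m : ℝ) + β + 1))

/-- The Laguerre heat kernel on `(0,∞)`. -/
def laguerreKernel (β t x y : ℝ) : ℝ :=
  Real.sqrt (2 * Real.exp (-t) / (1 - Real.exp (-2 * t))) *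
    Real.sqrt (2 * x * y * Real.exp (-t) / (1 - Real.exp (-2 * t))) *
    besselI β (2 * x * y * Real.exp (-t) / (1 - Real.exp (-2 * t))) *
    Real.exp (-(1 / 2) * (x ^ 2 + y ^ 2) * (1 + Real.exp (-2 * t)) / (1 - Real.exp (-2 * t)))

/-- The Laguerre heat semigroup on `(0,∞)`, acting on `B`-valued functions. -/
def laguerreOp {B : Type*} [NormedAddCommGroup B] [NormedSpace ℝ B] (β t : ℝ)
    (f : ℝ → B) (x : ℝ) : B :=
  ∫ y in Ioi (0 : ℝ), laguerreKernel β t x y • f y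

/-- The Littlewood–Paley `g`-function of order `α` of a curve `φ : (0,∞) → B`. -/
def gCurve {B : Type*} [NormedAddCommGroup B] [NormedSpace ℝ B]
    (q α : ℝ) (φ : ℝ → B) : ℝ≥0∞ :=
  (∫⁻ t in Ioi (0 : ℝ), ENNReal.ofReal ((t ^ α * ‖weylDeriv α φ t‖) ^ q / t)) ^ (1 / q)

/-- The first-order Littlewood–Paley `g`-function of a curve `φ : (0,∞) → B`. -/
def gOneCurve {B : Type*} [NormedAddCommGroup B] [NormedSpace ℝ B]
    (q : ℝ) (φ : ℝ → B) : ℝ≥0∞ :=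
  (∫⁻ t in Ioi (0 : ℝ), ENNReal.ofReal ((t * ‖deriv φ t‖) ^ q / t)) ^ (1 / q)

/-- The Littlewood–Paley function `g^α_{q,W;B}` for the classical heat semigroup. -/
def gHeat {B : Type*} [NormedAddCommGroup B] [NormedSpace ℝ B] (n : ℕ) (q α : ℝ)
    (f : EuclideanSpace ℝ (Fin n) → B) (x : EuclideanSpace ℝ (Fin n)) : ℝ≥0∞ :=
  gCurve q α (fun t => heatOp n t f x)

/-- The Littlewood–Paley function `g^α_{q,W^H;B}` for the Hermite heat semigroup. -/
def gHermite {B : Type*} [NormedAddCommGroup B] [NormedSpace ℝ B] (n : ℕ) (q α : ℝ)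
    (f : EuclideanSpace ℝ (Fin n) → B) (x : EuclideanSpace ℝ (Fin n)) : ℝ≥0∞ :=
  gCurve q α (fun t => hermiteOp n t f x)

/-- The Littlewood–Paley function `g^α_{q,W^{L_β};B}` for the Laguerre heat semigroup. -/
def gLaguerre {B : Type*} [NormedAddCommGroup B] [NormedSpace ℝ B] (β q α : ℝ)
    (f : ℝ → B) (x : ℝ) : ℝ≥0∞ :=
  gCurve q α (fun t => laguerreOp β t f x)

/-- The area integral `𝒜^α_{q,W;B}` for the classical heat semigroup on `ℝⁿ`. -/
def areaHeat {B : Type*} [NormedAddCommGroup B] [NormedSpace ℝ B] (n : ℕ) (q α : ℝ)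
    (f : EuclideanSpace ℝ (Fin n) → B) (x : EuclideanSpace ℝ (Fin n)) : ℝ≥0∞ :=
  (∫⁻ yt in {yt : EuclideanSpace ℝ (Fin n) × ℝ | 0 < yt.2 ∧ ‖yt.1 - x‖ < yt.2},
      ENNReal.ofReal
        (((yt.2 ^ 2) ^ α * ‖weylDeriv α (fun s => heatOp n s f yt.1) (yt.2 ^ 2)‖) ^ q /
          yt.2 ^ (n + 1))) ^ (1 / q)

/-- The area integral `𝒜^α_{q,W^H;B}` for the Hermite heat semigroup on `ℝⁿ`. -/
def areaHermite {B : Type*} [NormedAddCommGroup B] [NormedSpace ℝ B] (n : ℕ) (q α : ℝ)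
    (f : EuclideanSpace ℝ (Fin n) → B) (x : EuclideanSpace ℝ (Fin n)) : ℝ≥0∞ :=
  (∫⁻ yt in {yt : EuclideanSpace ℝ (Fin n) × ℝ | 0 < yt.2 ∧ ‖yt.1 - x‖ < yt.2},
      ENNReal.ofReal
        (((yt.2 ^ 2) ^ α * ‖weylDeriv α (fun s => hermiteOp n s f yt.1) (yt.2 ^ 2)‖) ^ q /
          yt.2 ^ (n + 1))) ^ (1 / q)

/-- The area integral `𝒜^α_{q,W^{L_β};B}` for the Laguerre heat semigroup on `(0,∞)`. -/
def areaLaguerre {B : Type*} [NormedAddCommGroup B] [NormedSpace ℝ B] (β q α : ℝ)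
    (f : ℝ → B) (x : ℝ) : ℝ≥0∞ :=
  (∫⁻ yt in {yt : ℝ × ℝ | 0 < yt.1 ∧ 0 < yt.2 ∧ |yt.1 - x| < yt.2},
      ENNReal.ofReal
        (((yt.2 ^ 2) ^ α * ‖weylDeriv α (fun s => laguerreOp β s f yt.1) (yt.2 ^ 2)‖) ^ q /
          yt.2 ^ 2)) ^ (1 / q)

/-- Membership in the algebraic tensor product `L^p ⊗ B`. -/
def InLpTensor {X : Type*} [MeasurableSpace X] {B : Type*} [NormedAddCommGroup B]
    [NormedSpace ℝ B] (μ : Measure X) (p : ℝ≥0∞) (f : X → B) : Prop :=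
  ∃ (k : ℕ) (φ : Fin k → X → ℝ) (b : Fin k → B),
    (∀ i, MemLp (φ i) p μ) ∧ ∀ x, f x = ∑ i, φ i x • b i

/-- Membership in the algebraic tensor product `C_c^∞(ℝⁿ) ⊗ B`. -/
def InCcSmoothTensor {B : Type*} [NormedAddCommGroup B] [NormedSpace ℝ B] (n : ℕ)
    (f : EuclideanSpace ℝ (Fin n) → B) : Prop :=
  ∃ (k : ℕ) (φ : Fin k → EuclideanSpace ℝ (Fin n) → ℝ) (b : Fin k → B),
    (∀ i, ContDiff ℝ (⊤ : ℕ∞) (φ i) ∧ HasCompactSupport (φ i)) ∧ ∀ x, f x = ∑ i, φ i x • b i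

set_option maxHeartbeats 1000000

lemma exp_neg_le_inv_add (x : ℝ) (hx : 0 ≤ x) : Real.exp (-x) * (1 + x) ≤ 1 := by
  have h := Real.add_one_le_exp x
  have h2 : Real.exp (-x) * Real.exp x = 1 := by rw [← Real.exp_add]; simp
  nlinarith [Real.exp_pos (-x), Real.exp_pos x]

lemma one_sub_exp_neg_ge (x : ℝ) (hx : 0 ≤ x) : x ≤ (1 - Real.exp (-x)) * (1 + x) := by
  have h := exp_neg_le_inv_add x hx
  nlinarith [Real.exp_pos (-x)]

-- t³ s ≤ 36 (1-s²)³  where s = e^{-2t}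
lemma X3_bound (t : ℝ) (ht : 0 < t) :
    t ^ 3 * Real.exp (-2 * t) ≤ 36 * (1 - Real.exp (-2 * t) ^ 2) ^ 3 := by
  set s : ℝ := Real.exp (-2 * t) with hs
  have hs0 : 0 < s := Real.exp_pos _
  have hs1 : s < 1 := by rw [hs, Real.exp_lt_one_iff]; nlinarith
  have he4 : Real.exp (-(4 * t)) = s ^ 2 := by rw [hs, ← Real.exp_nat_mul]; ring_nf
  rcases le_or_gt t 1 with h1 | h1
  · have h := one_sub_exp_neg_ge (4 * t) (by linarith)
    rw [he4] at h
    have h45 : 4 * t / 5 ≤ 1 - s ^ 2 := by nlinarith [sq_nonneg s]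
    have hc : (4 * t / 5) ^ 3 ≤ (1 - s ^ 2) ^ 3 := pow_le_pow_left₀ (by linarith) h45 3
    nlinarith [pow_nonneg ht.le 3]
  · have h1' : s ^ 2 ≤ Real.exp (-4) := by
      rw [← he4]; exact Real.exp_le_exp.mpr (by linarith)
    have h2' : Real.exp (-4) ≤ 1 / 2 := by
      have h3 := Real.add_one_le_exp (4:ℝ)
      have h4 : Real.exp (-4) * Real.exp 4 = 1 := by rw [← Real.exp_add]; norm_num
      nlinarith [Real.exp_pos (-4:ℝ)]
    have hhalf : 1 / 2 ≤ 1 - s ^ 2 := by linarith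
    have ht3 : t ^ 3 * s ≤ 27 / 8 := by
      have he3 : Real.exp (2 * t / 3) ^ 3 = Real.exp (2 * t) := by
        rw [← Real.exp_nat_mul]; ring_nf
      have hse : s * Real.exp (2 * t) = 1 := by rw [hs, ← Real.exp_add]; norm_num
      have hge : 2 * t / 3 ≤ Real.exp (2 * t / 3) := by
        have := Real.add_one_le_exp (2 * t / 3); linarith
      have hcube : (2 * t / 3) ^ 3 ≤ Real.exp (2 * t) := by
        rw [← he3]; exact pow_le_pow_left₀ (by linarith) hge 3
      have hmul := mul_le_mul_of_nonneg_left hcube hs0.le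
      rw [hse] at hmul
      nlinarith [hmul]
    have hc : (1 / 2 : ℝ) ^ 3 ≤ (1 - s ^ 2) ^ 3 := pow_le_pow_left₀ (by norm_num) hhalf 3
    nlinarith [hc]

-- t⁵ s³ ≤ 36 (1-s)⁴ (1-s²)  where s = e^{-2t}
lemma X5_bound (t : ℝ) (ht : 0 < t) :
    t ^ 5 * Real.exp (-2 * t) ^ 3 ≤
      36 * ((1 - Real.exp (-2 * t)) ^ 4 * (1 - Real.exp (-2 * t) ^ 2)) := by
  set s : ℝ := Real.exp (-2 * t) with hs
  have hs0 : 0 < s := Real.exp_pos _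
  have hs1 : s < 1 := by rw [hs, Real.exp_lt_one_iff]; nlinarith
  have hfive : (1 - s) ^ 5 ≤ (1 - s) ^ 4 * (1 - s ^ 2) := by
    have h1 : 1 - s ≤ 1 - s ^ 2 := by nlinarith
    have h2 := mul_le_mul_of_nonneg_left h1 (pow_nonneg (by linarith : (0:ℝ) ≤ 1 - s) 4)
    calc (1 - s) ^ 5 = (1 - s) ^ 4 * (1 - s) := by ring
      _ ≤ (1 - s) ^ 4 * (1 - s ^ 2) := h2
  have key : t ^ 5 * s ^ 3 ≤ 36 * (1 - s) ^ 5 := by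
    rcases le_or_gt t 1 with h1 | h1
    · have h := one_sub_exp_neg_ge (2 * t) (by linarith)
      have he2 : Real.exp (-(2 * t)) = s := by rw [hs]; ring_nf
      rw [he2] at h
      have h23 : 2 * t / 3 ≤ 1 - s := by nlinarith
      have hc : (2 * t / 3) ^ 5 ≤ (1 - s) ^ 5 := pow_le_pow_left₀ (by linarith) h23 5
      have hs3 : s ^ 3 ≤ 1 := by nlinarith
      have h5 : t ^ 5 * s ^ 3 ≤ t ^ 5 := by nlinarith [pow_nonneg ht.le 5, pow_nonneg hs0.le 3]
      nlinarith [pow_nonneg ht.le 5]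
    · have h1' : s ≤ Real.exp (-2) := by
        rw [hs]; exact Real.exp_le_exp.mpr (by linarith)
      have h2' : Real.exp (-2) ≤ 1 / 2 := by
        have h3 := Real.add_one_le_exp (2:ℝ)
        have h4 : Real.exp (-2) * Real.exp 2 = 1 := by rw [← Real.exp_add]; norm_num
        nlinarith [Real.exp_pos (-2:ℝ)]
      have hhalf : 1 / 2 ≤ 1 - s := by linarith
      have ht5 : t ^ 5 * s ^ 3 ≤ 1 := by
        have he6 : s ^ 3 * Real.exp (6 * t) = 1 := by
          rw [hs, ← Real.exp_nat_mul, ← Real.exp_add]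
          norm_num
          ring
        have hp5 : Real.exp t ^ 5 = Real.exp (5 * t) := by
          rw [← Real.exp_nat_mul]; ring_nf
        have hge : t ≤ Real.exp t := by have := Real.add_one_le_exp t; linarith
        have hc : t ^ 5 ≤ Real.exp (5 * t) := by
          rw [← hp5]; exact pow_le_pow_left₀ ht.le hge 5
        have hc6 : Real.exp (5 * t) ≤ Real.exp (6 * t) := Real.exp_le_exp.mpr (by linarith)
        have hmul := mul_le_mul_of_nonneg_left (hc.trans hc6) (pow_nonneg hs0.le 3)
        rw [he6] at hmul
        nlinarith [hmul, pow_nonneg hs0.le 3, pow_nonneg ht.le 5]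
      have hc : (1 / 2 : ℝ) ^ 5 ≤ (1 - s) ^ 5 := pow_le_pow_left₀ (by norm_num) hhalf 5
      nlinarith [hc]
  nlinarith [pow_nonneg ht.le 5, pow_nonneg hs0.le 3]

-- t s ≤ 2 (1-s)
lemma TS_bound (t : ℝ) (ht : 0 < t) :
    t * Real.exp (-2 * t) ≤ 2 * (1 - Real.exp (-2 * t)) := by
  set s : ℝ := Real.exp (-2 * t) with hs
  have hs0 : 0 < s := Real.exp_pos _
  have hs1 : s < 1 := by rw [hs, Real.exp_lt_one_iff]; nlinarith
  rcases le_or_gt t 1 with h1 | h1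
  · have h := one_sub_exp_neg_ge (2 * t) (by linarith)
    have he2 : Real.exp (-(2 * t)) = s := by rw [hs]; ring_nf
    rw [he2] at h
    nlinarith
  · have h1' : s ≤ Real.exp (-2) := by
      rw [hs]; exact Real.exp_le_exp.mpr (by linarith)
    have h2' : Real.exp (-2) ≤ 1 / 2 := by
      have h3 := Real.add_one_le_exp (2:ℝ)
      have h4 : Real.exp (-2) * Real.exp 2 = 1 := by rw [← Real.exp_add]; norm_num
      nlinarith [Real.exp_pos (-2:ℝ)]
    have hts : t * s ≤ 1 := by
      have hse : s * Real.exp (2 * t) = 1 := by rw [hs, ← Real.exp_add]; norm_num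
      have hge : t ≤ Real.exp (2 * t) := by
        have := Real.add_one_le_exp (2 * t); linarith
      have hmul := mul_le_mul_of_nonneg_left hge hs0.le
      rw [hse] at hmul
      nlinarith
    nlinarith

lemma key_est (n : ℕ) (hn : 1 ≤ n) (p q t : ℝ) (hp : 0 ≤ p) (hq : 0 ≤ q) (ht : 0 < t) :
    |t * ((Real.pi ^ (-(n : ℝ) / 2) *
          (Real.exp (-2 * t) / (1 - Real.exp (-4 * t))) ^ ((n : ℝ) / 2) *
          Real.exp (-(1 / 4) *
            (p ^ 2 * (1 + Real.exp (-2 * t)) / (1 - Real.exp (-2 * t)) +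
              q ^ 2 * (1 - Real.exp (-2 * t)) / (1 + Real.exp (-2 * t))))) *
        (-(n : ℝ) * (1 + Real.exp (-2 * t) ^ 2) / (1 - Real.exp (-2 * t) ^ 2) +
          p ^ 2 * Real.exp (-2 * t) / (1 - Real.exp (-2 * t)) ^ 2 -
          q ^ 2 * Real.exp (-2 * t) / (1 + Real.exp (-2 * t)) ^ 2))| ≤
      (12 * n + 128) * (Real.exp (-(1 / 48 * (p * q + p ^ 2))) *
        Real.exp (-(1 / 48 * p ^ 2 / t))) * t ^ (-(n : ℝ) / 2) := by
  set s : ℝ := Real.exp (-2 * t) with hs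
  have hs0 : 0 < s := Real.exp_pos _
  have hs1 : s < 1 := by rw [hs, Real.exp_lt_one_iff]; nlinarith
  have h1ms : (0:ℝ) < 1 - s := by linarith
  have h1ps : (0:ℝ) < 1 + s := by linarith
  have h1ms2 : (0:ℝ) < 1 - s ^ 2 := by nlinarith
  have he4 : Real.exp (-4 * t) = s ^ 2 := by rw [hs, ← Real.exp_nat_mul]; ring_nf
  have he2' : Real.exp (-(2 * t)) = s := by rw [hs]; ring_nf
  have hg0 : (0:ℝ) < s / (1 - s ^ 2) := by positivity
  rw [he4]
  -- basic time bounds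
  have hs2t : 1 - s ≤ 2 * t := by
    have h := Real.add_one_le_exp (-2 * t); rw [← hs] at h; linarith
  -- sinh bound: 4 t s ≤ 1 - s²
  have hsinh : 4 * t * s ≤ 1 - s ^ 2 := by
    have h := Real.self_le_sinh_iff.mpr (by linarith : (0:ℝ) ≤ 2 * t)
    rw [Real.sinh_eq, he2'] at h
    have he : Real.exp (2 * t) * s = 1 := by rw [hs, ← Real.exp_add]; norm_num
    nlinarith [Real.exp_pos (2 * t)]
  have htg : t * (s / (1 - s ^ 2)) ≤ 1 / 4 := by
    rw [show t * (s / (1 - s ^ 2)) = t * s / (1 - s ^ 2) by ring, div_le_iff₀ h1ms2]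
    linarith
  -- E2 and its lower bounds
  set E2 : ℝ := (1 / 4) * (p ^ 2 * (1 + s) / (1 - s) + q ^ 2 * (1 - s) / (1 + s)) with hE2def
  have harg : (-(1 / 4) : ℝ) * (p ^ 2 * (1 + s) / (1 - s) + q ^ 2 * (1 - s) / (1 + s)) = -E2 := by
    rw [hE2def]; ring
  rw [harg]
  set a : ℝ := p ^ 2 * ((1 + s) / (1 - s)) with hadef
  set b : ℝ := q ^ 2 * ((1 - s) / (1 + s)) with hbdef
  have hann : 0 ≤ a := by rw [hadef]; positivity
  have hbnn : 0 ≤ b := by rw [hbdef]; positivity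
  have h4E2 : 4 * E2 = a + b := by rw [hE2def, hadef, hbdef]; ring
  have hAge1 : (1:ℝ) ≤ (1 + s) / (1 - s) := by rw [le_div_iff₀ h1ms]; linarith
  have hE2a : p ^ 2 ≤ 4 * E2 := by
    have : p ^ 2 ≤ a := by
      rw [hadef]; exact le_mul_of_one_le_right (sq_nonneg p) hAge1
    linarith
  have hE2b : p ^ 2 / t ≤ 8 * E2 := by
    have hA2 : 1 / (2 * t) ≤ (1 + s) / (1 - s) := by
      rw [div_le_div_iff₀ (by linarith) h1ms]; nlinarith
    have h1 : p ^ 2 * (1 / (2 * t)) ≤ a := by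
      rw [hadef]; exact mul_le_mul_of_nonneg_left hA2 (sq_nonneg p)
    have h2 : p ^ 2 * (1 / (2 * t)) = p ^ 2 / t / 2 := by ring
    linarith
  have hE2c : q ^ 2 * (1 - s) / 2 ≤ 4 * E2 := by
    have hB2 : (1 - s) / 2 ≤ (1 - s) / (1 + s) := by
      rw [div_le_div_iff₀ (by norm_num) h1ps]; nlinarith
    have h1 : q ^ 2 * ((1 - s) / 2) ≤ b := by
      rw [hbdef]; exact mul_le_mul_of_nonneg_left hB2 (sq_nonneg q)
    have h2 : q ^ 2 * ((1 - s) / 2) = q ^ 2 * (1 - s) / 2 := by ring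
    linarith
  have hamgm : 2 * (p * q) ≤ 4 * E2 := by
    have hab : a * b = (p * q) ^ 2 := by
      rw [hadef, hbdef]; field_simp
    nlinarith [sq_nonneg (a - b), mul_nonneg hp hq]
  have hE2nn : 0 ≤ E2 := by linarith
  -- splitting the exponential
  have hsplit : Real.exp (-E2) = Real.exp (-(E2 / 2)) * Real.exp (-(E2 / 2)) := by
    rw [← Real.exp_add]; ring_nf
  have hexp2 : Real.exp (-(E2 / 2)) ≤
      Real.exp (-(1 / 48 * (p * q + p ^ 2))) * Real.exp (-(1 / 48 * p ^ 2 / t)) := by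
    rw [← Real.exp_add]
    apply Real.exp_le_exp.mpr
    have h1 : 1 / 48 * p ^ 2 / t = (p ^ 2 / t) / 48 := by ring
    rw [h1]
    linarith
  -- R bounds
  set R : ℝ := (t * (s / (1 - s ^ 2))) ^ ((n : ℝ) / 2) with hRdef
  have htgnn : 0 ≤ t * (s / (1 - s ^ 2)) := by positivity
  have hRnn : 0 ≤ R := by rw [hRdef]; positivity
  have hR1 : R ≤ 1 := Real.rpow_le_one htgnn (by linarith) (by positivity)
  have hn1 : (1:ℝ) ≤ (n:ℝ) := by exact_mod_cast hn
  have hR2 : R ≤ Real.sqrt (t * (s / (1 - s ^ 2))) := by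
    rw [Real.sqrt_eq_rpow, hRdef]
    exact Real.rpow_le_rpow_of_exponent_ge (by positivity) (by linarith) (by linarith)
  have hexp1 : Real.exp (-(E2 / 2)) ≤ 1 := Real.exp_le_one_iff.mpr (by linarith)
  have hexpnn : 0 ≤ Real.exp (-(E2 / 2)) := (Real.exp_pos _).le
  set sq2 : ℝ := Real.sqrt (t * (s / (1 - s ^ 2))) with hsqdef
  have hsqnn : 0 ≤ sq2 := Real.sqrt_nonneg _
  have hsqsq : sq2 ^ 2 = t * (s / (1 - s ^ 2)) := Real.sq_sqrt htgnn
  -- claims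
  have claim1 : t / (1 - s ^ 2) * sq2 ≤ 6 := by
    have hXval : (t / (1 - s ^ 2) * sq2) ^ 2 = t ^ 3 * s / (1 - s ^ 2) ^ 3 := by
      rw [mul_pow, hsqsq]; field_simp
    have hX3 := X3_bound t ht
    rw [← hs] at hX3
    refine le_of_pow_le_pow_left₀ two_ne_zero (by norm_num) ?_
    rw [hXval, div_le_iff₀ (by positivity)]
    norm_num
    linarith
  have claim2 : t ^ 2 * (s / (1 - s) ^ 2) * sq2 ≤ 6 := by
    have hXval : (t ^ 2 * (s / (1 - s) ^ 2) * sq2) ^ 2 =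
        t ^ 5 * s ^ 3 / ((1 - s) ^ 4 * (1 - s ^ 2)) := by
      rw [mul_pow, hsqsq]; field_simp
    have hX5 := X5_bound t ht
    rw [← hs] at hX5
    refine le_of_pow_le_pow_left₀ two_ne_zero (by norm_num) ?_
    rw [hXval, div_le_iff₀ (by positivity)]
    norm_num
    linarith
  have claim3 : t * s * (16 / (1 - s)) ≤ 32 := by
    have hTS := TS_bound t ht
    rw [← hs] at hTS
    rw [show t * s * (16 / (1 - s)) = 16 * (t * s) / (1 - s) by ring, div_le_iff₀ h1ms]
    linarith
  -- term bounds
  have Tb1 : t * ((n:ℝ) * (1 + s ^ 2) / (1 - s ^ 2)) * R * Real.exp (-(E2 / 2)) ≤ 12 * n := by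
    have h1 : t * ((n:ℝ) * (1 + s ^ 2) / (1 - s ^ 2)) * R * Real.exp (-(E2 / 2)) ≤
        t * ((n:ℝ) * (1 + s ^ 2) / (1 - s ^ 2)) * sq2 * 1 := by
      apply mul_le_mul (mul_le_mul_of_nonneg_left hR2 (by positivity)) hexp1 hexpnn
      positivity
    have h2 : t * ((n:ℝ) * (1 + s ^ 2) / (1 - s ^ 2)) * sq2 * 1 =
        ((n:ℝ) * (1 + s ^ 2)) * (t / (1 - s ^ 2) * sq2) := by ring
    have h3 : ((n:ℝ) * (1 + s ^ 2)) * (t / (1 - s ^ 2) * sq2) ≤ ((n:ℝ) * 2) * 6 := by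
      apply mul_le_mul _ claim1 (by positivity) (by positivity)
      have hsq1 : s ^ 2 ≤ 1 := pow_le_one₀ hs0.le hs1.le
      have : (1 + s ^ 2) ≤ 2 := by linarith
      exact mul_le_mul_of_nonneg_left this n.cast_nonneg
    linarith
  have hpe : p ^ 2 * Real.exp (-(E2 / 2)) ≤ 16 * t := by
    have hz : p ^ 2 / (16 * t) ≤ E2 / 2 := by
      have h1 : p ^ 2 / (16 * t) = (p ^ 2 / t) / 16 := by ring
      rw [h1]; linarith
    have hm : Real.exp (-(E2 / 2)) ≤ Real.exp (-(p ^ 2 / (16 * t))) :=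
      Real.exp_le_exp.mpr (by linarith)
    have hkey : p ^ 2 * Real.exp (-(p ^ 2 / (16 * t))) ≤ 16 * t := by
      have h1 := Real.add_one_le_exp (p ^ 2 / (16 * t))
      have h2 : 16 * t * (p ^ 2 / (16 * t)) = p ^ 2 := by field_simp
      have h3 : p ^ 2 + 16 * t ≤ 16 * t * Real.exp (p ^ 2 / (16 * t)) := by
        have h4 := mul_le_mul_of_nonneg_left h1 (by linarith : (0:ℝ) ≤ 16 * t)
        have h5 : 16 * t * (p ^ 2 / (16 * t) + 1) = 16 * t * (p ^ 2 / (16 * t)) + 16 * t := by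
          ring
        rw [h5, h2] at h4
        linarith
      rw [Real.exp_neg, ← div_eq_mul_inv, div_le_iff₀ (Real.exp_pos _)]
      linarith
    calc p ^ 2 * Real.exp (-(E2 / 2)) ≤ p ^ 2 * Real.exp (-(p ^ 2 / (16 * t))) :=
          mul_le_mul_of_nonneg_left hm (sq_nonneg p)
      _ ≤ 16 * t := hkey
  have hqe : q ^ 2 * Real.exp (-(E2 / 2)) ≤ 16 / (1 - s) := by
    have hz : q ^ 2 * (1 - s) / 16 ≤ E2 / 2 := by linarith
    have hm : Real.exp (-(E2 / 2)) ≤ Real.exp (-(q ^ 2 * (1 - s) / 16)) :=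
      Real.exp_le_exp.mpr (by linarith)
    have hkey : q ^ 2 * Real.exp (-(q ^ 2 * (1 - s) / 16)) ≤ 16 / (1 - s) := by
      have h1 := Real.add_one_le_exp (q ^ 2 * (1 - s) / 16)
      have h2 : (16 / (1 - s)) * (q ^ 2 * (1 - s) / 16) = q ^ 2 := by
        field_simp
      have h3 : q ^ 2 + 16 / (1 - s) ≤ (16 / (1 - s)) * Real.exp (q ^ 2 * (1 - s) / 16) := by
        have h4 := mul_le_mul_of_nonneg_left h1 (by positivity : (0:ℝ) ≤ 16 / (1 - s))
        have h5 : 16 / (1 - s) * (q ^ 2 * (1 - s) / 16 + 1) =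
            16 / (1 - s) * (q ^ 2 * (1 - s) / 16) + 16 / (1 - s) := by ring
        rw [h5, h2] at h4
        linarith
      rw [Real.exp_neg, ← div_eq_mul_inv, div_le_iff₀ (Real.exp_pos _)]
      have h6 : (0:ℝ) < 16 / (1 - s) := by positivity
      linarith
    calc q ^ 2 * Real.exp (-(E2 / 2)) ≤ q ^ 2 * Real.exp (-(q ^ 2 * (1 - s) / 16)) :=
          mul_le_mul_of_nonneg_left hm (sq_nonneg q)
      _ ≤ 16 / (1 - s) := hkey
  have Tb2 : t * (p ^ 2 * s / (1 - s) ^ 2) * R * Real.exp (-(E2 / 2)) ≤ 96 := by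
    have h1 : t * (p ^ 2 * s / (1 - s) ^ 2) * R * Real.exp (-(E2 / 2)) =
        (t * (s / (1 - s) ^ 2) * R) * (p ^ 2 * Real.exp (-(E2 / 2))) := by ring
    have h2 : (t * (s / (1 - s) ^ 2) * R) * (p ^ 2 * Real.exp (-(E2 / 2))) ≤
        (t * (s / (1 - s) ^ 2) * sq2) * (16 * t) := by
      apply mul_le_mul (mul_le_mul_of_nonneg_left hR2 (by positivity)) hpe
        (by positivity) (by positivity)
    have h3 : (t * (s / (1 - s) ^ 2) * sq2) * (16 * t) =
        16 * (t ^ 2 * (s / (1 - s) ^ 2) * sq2) := by ring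
    rw [h1]
    refine h2.trans ?_
    rw [h3]
    linarith [claim2]
  have Tb3 : t * (q ^ 2 * s / (1 + s) ^ 2) * R * Real.exp (-(E2 / 2)) ≤ 32 := by
    have h1 : t * (q ^ 2 * s / (1 + s) ^ 2) * R * Real.exp (-(E2 / 2)) =
        (t * (s / (1 + s) ^ 2) * R) * (q ^ 2 * Real.exp (-(E2 / 2))) := by ring
    have hss : s / (1 + s) ^ 2 ≤ s := by
      apply div_le_self hs0.le
      have : 1 ≤ 1 + s := by linarith
      calc (1:ℝ) ≤ 1 + s := this
        _ ≤ (1 + s) ^ 2 := by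
          rw [pow_two]
          exact le_mul_of_one_le_left (by linarith) (by linarith)
    have h2 : t * (s / (1 + s) ^ 2) * R ≤ t * s := by
      calc t * (s / (1 + s) ^ 2) * R ≤ t * (s / (1 + s) ^ 2) * 1 :=
            mul_le_mul_of_nonneg_left hR1 (by positivity)
        _ = t * (s / (1 + s) ^ 2) := by ring
        _ ≤ t * s := mul_le_mul_of_nonneg_left hss ht.le
    have h3 : (t * (s / (1 + s) ^ 2) * R) * (q ^ 2 * Real.exp (-(E2 / 2))) ≤
        (t * s) * (16 / (1 - s)) := by
      apply mul_le_mul h2 hqe (by positivity) (by positivity)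
    calc t * (q ^ 2 * s / (1 + s) ^ 2) * R * Real.exp (-(E2 / 2))
        = (t * (s / (1 + s) ^ 2) * R) * (q ^ 2 * Real.exp (-(E2 / 2))) := h1
      _ ≤ (t * s) * (16 / (1 - s)) := h3
      _ = t * s * (16 / (1 - s)) := by ring
      _ ≤ 32 := claim3
  -- final assembly
  set DS : ℝ := (n:ℝ) * (1 + s ^ 2) / (1 - s ^ 2) + p ^ 2 * s / (1 - s) ^ 2 +
      q ^ 2 * s / (1 + s) ^ 2 with hDSdef
  have hDSnn : 0 ≤ DS := by rw [hDSdef]; positivity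
  have hDabs : |(-(n:ℝ) * (1 + s ^ 2) / (1 - s ^ 2) + p ^ 2 * s / (1 - s) ^ 2 -
      q ^ 2 * s / (1 + s) ^ 2)| ≤ DS := by
    have n1 : (0:ℝ) ≤ (n:ℝ) * (1 + s ^ 2) / (1 - s ^ 2) := by positivity
    have n2 : (0:ℝ) ≤ p ^ 2 * s / (1 - s) ^ 2 := by positivity
    have n3 : (0:ℝ) ≤ q ^ 2 * s / (1 + s) ^ 2 := by positivity
    rw [hDSdef]
    rw [abs_le]
    constructor
    · have : -(n:ℝ) * (1 + s ^ 2) / (1 - s ^ 2) = -((n:ℝ) * (1 + s ^ 2) / (1 - s ^ 2)) := by ring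
      rw [this]; linarith
    · have : -(n:ℝ) * (1 + s ^ 2) / (1 - s ^ 2) = -((n:ℝ) * (1 + s ^ 2) / (1 - s ^ 2)) := by ring
      rw [this]; linarith
  set G : ℝ := (s / (1 - s ^ 2)) ^ ((n : ℝ) / 2) with hGdef
  have hGpos : 0 < G := Real.rpow_pos_of_pos hg0 _
  have hpipos : 0 < Real.pi ^ (-(n : ℝ) / 2) := Real.rpow_pos_of_pos Real.pi_pos _
  have hpile : Real.pi ^ (-(n : ℝ) / 2) ≤ 1 := by
    apply Real.rpow_le_one_of_one_le_of_nonpos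
    · linarith [Real.pi_gt_three]
    · have : (0:ℝ) ≤ (n:ℝ) := n.cast_nonneg
      linarith
  have htpos : (0:ℝ) < t ^ (-(n : ℝ) / 2) := Real.rpow_pos_of_pos ht _
  have hGsplit : G = R * t ^ (-((n : ℝ) / 2)) := by
    rw [hGdef, hRdef, Real.mul_rpow ht.le hg0.le, Real.rpow_neg ht.le]
    have hne : t ^ ((n : ℝ) / 2) ≠ 0 := (Real.rpow_pos_of_pos ht _).ne'
    field_simp
  have hM : t * DS * R * Real.exp (-(E2 / 2)) ≤ 12 * n + 128 := by
    have hsum : t * DS * R * Real.exp (-(E2 / 2)) =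
        t * ((n:ℝ) * (1 + s ^ 2) / (1 - s ^ 2)) * R * Real.exp (-(E2 / 2)) +
        t * (p ^ 2 * s / (1 - s) ^ 2) * R * Real.exp (-(E2 / 2)) +
        t * (q ^ 2 * s / (1 + s) ^ 2) * R * Real.exp (-(E2 / 2)) := by
      rw [hDSdef]; ring
    linarith
  have hKpos : 0 < Real.pi ^ (-(n : ℝ) / 2) * G * Real.exp (-E2) := by positivity
  calc |t * ((Real.pi ^ (-(n : ℝ) / 2) * G * Real.exp (-E2)) *
        (-(n:ℝ) * (1 + s ^ 2) / (1 - s ^ 2) + p ^ 2 * s / (1 - s) ^ 2 -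
          q ^ 2 * s / (1 + s) ^ 2))|
      = t * ((Real.pi ^ (-(n : ℝ) / 2) * G * Real.exp (-E2)) *
          |(-(n:ℝ) * (1 + s ^ 2) / (1 - s ^ 2) + p ^ 2 * s / (1 - s) ^ 2 -
            q ^ 2 * s / (1 + s) ^ 2)|) := by
        rw [abs_mul, abs_mul, abs_of_pos ht, abs_of_pos hKpos]
    _ ≤ t * ((Real.pi ^ (-(n : ℝ) / 2) * G * Real.exp (-E2)) * DS) := by
        apply mul_le_mul_of_nonneg_left _ ht.le
        exact mul_le_mul_of_nonneg_left hDabs hKpos.le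
    _ ≤ t * ((1 * G * Real.exp (-E2)) * DS) := by
        apply mul_le_mul_of_nonneg_left _ ht.le
        apply mul_le_mul_of_nonneg_right _ hDSnn
        apply mul_le_mul_of_nonneg_right _ (Real.exp_pos _).le
        exact mul_le_mul_of_nonneg_right hpile hGpos.le
    _ = (t * DS * R * Real.exp (-(E2 / 2))) * Real.exp (-(E2 / 2)) *
          t ^ (-((n : ℝ) / 2)) := by
        rw [hGsplit, hsplit]; ring
    _ ≤ ((12 * n + 128) : ℝ) * (Real.exp (-(1 / 48 * (p * q + p ^ 2))) *
          Real.exp (-(1 / 48 * p ^ 2 / t))) * t ^ (-((n : ℝ) / 2)) := by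
        apply mul_le_mul_of_nonneg_right _ (Real.rpow_pos_of_pos ht _).le
        apply mul_le_mul hM hexp2 hexpnn
        positivity
    _ = (12 * n + 128 : ℝ) * (Real.exp (-(1 / 48 * (p * q + p ^ 2))) *
          Real.exp (-(1 / 48 * p ^ 2 / t))) * t ^ (-(n : ℝ) / 2) := by
        norm_num [neg_div]
open Real
set_option maxHeartbeats 2000000

noncomputable section

lemma hermite_hasDerivAt (n : ℕ) (u v t : ℝ) (ht : 0 < t) :
    HasDerivAt (fun r : ℝ =>
        Real.pi ^ (-(n : ℝ) / 2) * (Real.exp (-2 * r) / (1 - Real.exp (-4 * r))) ^ ((n : ℝ) / 2) *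
          Real.exp (-(1 / 4) *
            (u * (1 + Real.exp (-2 * r)) / (1 - Real.exp (-2 * r)) +
              v * (1 - Real.exp (-2 * r)) / (1 + Real.exp (-2 * r)))))
      ((Real.pi ^ (-(n : ℝ) / 2) *
          (Real.exp (-2 * t) / (1 - Real.exp (-4 * t))) ^ ((n : ℝ) / 2) *
          Real.exp (-(1 / 4) *
            (u * (1 + Real.exp (-2 * t)) / (1 - Real.exp (-2 * t)) +
              v * (1 - Real.exp (-2 * t)) / (1 + Real.exp (-2 * t))))) *
        (-(n : ℝ) * (1 + Real.exp (-2 * t) ^ 2) / (1 - Real.exp (-2 * t) ^ 2) +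
          u * Real.exp (-2 * t) / (1 - Real.exp (-2 * t)) ^ 2 -
          v * Real.exp (-2 * t) / (1 + Real.exp (-2 * t)) ^ 2)) t := by
  set s : ℝ := Real.exp (-2 * t) with hs
  have hs0 : 0 < s := Real.exp_pos _
  have hs1 : s < 1 := by
    rw [hs, Real.exp_lt_one_iff]; nlinarith
  have h1ms : (0:ℝ) < 1 - s := by linarith
  have h1ps : (0:ℝ) < 1 + s := by linarith
  have h1ms2 : (0:ℝ) < 1 - s ^ 2 := by nlinarith
  have he4 : Real.exp (-4 * t) = s ^ 2 := by
    rw [hs, ← Real.exp_nat_mul]; ring_nf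
  have hg0 : (0:ℝ) < s / (1 - s ^ 2) := by positivity
  have hd2 : HasDerivAt (fun r : ℝ => Real.exp (-2 * r)) (-2 * s) t := by
    have h : HasDerivAt (fun r : ℝ => -2 * r) (-2) t := by
      simpa using (hasDerivAt_id t).const_mul (-2)
    simpa [hs, mul_comm] using h.exp
  have hd4 : HasDerivAt (fun r : ℝ => Real.exp (-4 * r)) (-4 * s ^ 2) t := by
    have h : HasDerivAt (fun r : ℝ => -4 * r) (-4) t := by
      simpa using (hasDerivAt_id t).const_mul (-4)
    have h2 := h.exp
    rw [he4] at h2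
    simpa [mul_comm] using h2
  have hden : HasDerivAt (fun r : ℝ => 1 - Real.exp (-4 * r)) (4 * s ^ 2) t := by
    simpa using (hd4.const_sub 1)
  have hg : HasDerivAt (fun r : ℝ => Real.exp (-2 * r) / (1 - Real.exp (-4 * r)))
      ((-2 * s * (1 - s ^ 2) - s * (4 * s ^ 2)) / (1 - s ^ 2) ^ 2) t := by
    have h' := hd2.div hden (by rw [he4]; exact ne_of_gt h1ms2)
    rw [he4] at h'
    exact h'
  -- rpow part
  have hG : HasDerivAt
      (fun r : ℝ => (Real.exp (-2 * r) / (1 - Real.exp (-4 * r))) ^ ((n : ℝ) / 2))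
      (((-2 * s * (1 - s ^ 2) - s * (4 * s ^ 2)) / (1 - s ^ 2) ^ 2) * ((n : ℝ) / 2) *
        (s / (1 - s ^ 2)) ^ ((n : ℝ) / 2 - 1)) t := by
    have h' := hg.rpow_const (p := (n : ℝ) / 2) (Or.inl (by rw [he4]; exact ne_of_gt hg0))
    rw [he4] at h'
    exact h'
  -- exponent part
  have hA : HasDerivAt (fun r : ℝ => u * (1 + Real.exp (-2 * r)) / (1 - Real.exp (-2 * r)))
      ((u * (-2 * s) * (1 - s) - u * (1 + s) * (2 * s)) / (1 - s) ^ 2) t := by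
    have hnum : HasDerivAt (fun r : ℝ => u * (1 + Real.exp (-2 * r))) (u * (-2 * s)) t := by
      simpa [mul_assoc] using ((hd2.const_add 1).const_mul u)
    have hd : HasDerivAt (fun r : ℝ => 1 - Real.exp (-2 * r)) (2 * s) t := by
      simpa using (hd2.const_sub 1)
    exact hnum.div hd (ne_of_gt h1ms)
  have hB : HasDerivAt (fun r : ℝ => v * (1 - Real.exp (-2 * r)) / (1 + Real.exp (-2 * r)))
      ((v * (2 * s) * (1 + s) - v * (1 - s) * (-2 * s)) / (1 + s) ^ 2) t := by
    have hnum : HasDerivAt (fun r : ℝ => v * (1 - Real.exp (-2 * r))) (v * (2 * s)) t := by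
      simpa [mul_assoc] using ((hd2.const_sub 1).const_mul v)
    have hd : HasDerivAt (fun r : ℝ => 1 + Real.exp (-2 * r)) (-2 * s) t := by
      simpa using (hd2.const_add 1)
    exact hnum.div hd (ne_of_gt h1ps)
  have hE : HasDerivAt (fun r : ℝ => Real.exp (-(1 / 4) *
      (u * (1 + Real.exp (-2 * r)) / (1 - Real.exp (-2 * r)) +
        v * (1 - Real.exp (-2 * r)) / (1 + Real.exp (-2 * r)))))
      (Real.exp (-(1 / 4) *
        (u * (1 + s) / (1 - s) + v * (1 - s) / (1 + s))) *
        (-(1 / 4) * ((u * (-2 * s) * (1 - s) - u * (1 + s) * (2 * s)) / (1 - s) ^ 2 +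
          (v * (2 * s) * (1 + s) - v * (1 - s) * (-2 * s)) / (1 + s) ^ 2))) t := by
    exact ((hA.add hB).const_mul (-(1/4))).exp
  have hK := ((hG.const_mul (Real.pi ^ (-(n : ℝ) / 2))).mul hE)
  have hrp : (s / (1 - s ^ 2)) ^ ((n : ℝ) / 2 - 1) =
      (s / (1 - s ^ 2)) ^ ((n : ℝ) / 2) / (s / (1 - s ^ 2)) :=
    Real.rpow_sub_one (ne_of_gt hg0) _
  rw [← hs, he4, hrp] at hK
  rw [he4]
  set G := (s / (1 - s ^ 2)) ^ ((n : ℝ) / 2) with hGdef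
  set E := Real.exp (-(1 / 4) * (u * (1 + s) / (1 - s) + v * (1 - s) / (1 + s))) with hEdef
  refine HasDerivAt.congr_deriv hK ?_
  have hsne : s ≠ 0 := ne_of_gt hs0
  have h1 : (1 : ℝ) - s ≠ 0 := ne_of_gt h1ms
  have h2 : (1 : ℝ) + s ≠ 0 := ne_of_gt h1ps
  have h3 : (1 : ℝ) - s ^ 2 ≠ 0 := ne_of_gt h1ms2
  field_simp
  ring

/-- Gaussian bound with extra exponential decay for the time derivative of
the Hermite heat kernel. -/
theorem stmt_19 (n : ℕ) (hn : 1 ≤ n) :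
    ∃ C c : ℝ, 0 < C ∧ 0 < c ∧ ∀ x y : EuclideanSpace ℝ (Fin n), ∀ t : ℝ, 0 < t →
      |t * deriv (fun s => hermiteKernel n s x y) t| ≤
        C * Real.exp (-(c * ((‖x‖ + ‖y‖) * ‖x - y‖))) *
          Real.exp (-(c * ‖x - y‖ ^ 2 / t)) * t ^ (-(n : ℝ) / 2) := by
  refine ⟨12 * n + 128, 1 / 48, by positivity, by norm_num, ?_⟩
  intro x y t ht
  have hd := hermite_hasDerivAt n (‖x - y‖ ^ 2) (‖x + y‖ ^ 2) t ht
  have hd' : HasDerivAt (fun s => hermiteKernel n s x y)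
      ((Real.pi ^ (-(n : ℝ) / 2) *
          (Real.exp (-2 * t) / (1 - Real.exp (-4 * t))) ^ ((n : ℝ) / 2) *
          Real.exp (-(1 / 4) *
            (‖x - y‖ ^ 2 * (1 + Real.exp (-2 * t)) / (1 - Real.exp (-2 * t)) +
              ‖x + y‖ ^ 2 * (1 - Real.exp (-2 * t)) / (1 + Real.exp (-2 * t))))) *
        (-(n : ℝ) * (1 + Real.exp (-2 * t) ^ 2) / (1 - Real.exp (-2 * t) ^ 2) +
          ‖x - y‖ ^ 2 * Real.exp (-2 * t) / (1 - Real.exp (-2 * t)) ^ 2 -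
          ‖x + y‖ ^ 2 * Real.exp (-2 * t) / (1 + Real.exp (-2 * t)) ^ 2)) t := by
    simpa only [hermiteKernel] using hd
  rw [hd'.deriv]
  have hkey := key_est n hn ‖x - y‖ ‖x + y‖ t (norm_nonneg _) (norm_nonneg _) ht
  refine hkey.trans ?_
  have hx2 : 2 * ‖x‖ ≤ ‖x + y‖ + ‖x - y‖ := by
    have h := norm_add_le (x + y) (x - y)
    have e0 : (x + y) + (x - y) = (2:ℝ) • x := by
      rw [show ((2:ℝ) • x) = x + x from two_smul ℝ x]; abel
    rw [e0, norm_smul] at h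
    simp only [Real.norm_ofNat] at h
    linarith
  have hy2 : 2 * ‖y‖ ≤ ‖x + y‖ + ‖x - y‖ := by
    have h := norm_sub_le (x + y) (x - y)
    have e0 : (x + y) - (x - y) = (2:ℝ) • y := by
      rw [show ((2:ℝ) • y) = y + y from two_smul ℝ y]; abel
    rw [e0, norm_smul] at h
    simp only [Real.norm_ofNat] at h
    linarith
  have hsum : ‖x‖ + ‖y‖ ≤ ‖x + y‖ + ‖x - y‖ := by linarith
  have hP : (‖x‖ + ‖y‖) * ‖x - y‖ ≤ ‖x - y‖ * ‖x + y‖ + ‖x - y‖ ^ 2 := by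
    have h := mul_le_mul_of_nonneg_right hsum (norm_nonneg (x - y))
    nlinarith [h]
  have he1 : Real.exp (-(1 / 48 * (‖x - y‖ * ‖x + y‖ + ‖x - y‖ ^ 2))) ≤
      Real.exp (-(1 / 48 * ((‖x‖ + ‖y‖) * ‖x - y‖))) :=
    Real.exp_le_exp.mpr (by linarith)
  have htp : (0:ℝ) ≤ t ^ (-(n : ℝ) / 2) := (Real.rpow_pos_of_pos ht _).le
  calc (12 * n + 128 : ℝ) * (Real.exp (-(1 / 48 * (‖x - y‖ * ‖x + y‖ + ‖x - y‖ ^ 2))) *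
        Real.exp (-(1 / 48 * ‖x - y‖ ^ 2 / t))) * t ^ (-(n : ℝ) / 2)
      ≤ (12 * n + 128 : ℝ) * (Real.exp (-(1 / 48 * ((‖x‖ + ‖y‖) * ‖x - y‖))) *
        Real.exp (-(1 / 48 * ‖x - y‖ ^ 2 / t))) * t ^ (-(n : ℝ) / 2) := by
        apply mul_le_mul_of_nonneg_right _ htp
        apply mul_le_mul_of_nonneg_left _ (by positivity)
        exact mul_le_mul_of_nonneg_right he1 (Real.exp_pos _).le
    _ = (12 * n + 128 : ℝ) * Real.exp (-(1 / 48 * ((‖x‖ + ‖y‖) * ‖x - y‖))) *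
        Real.exp (-(1 / 48 * ‖x - y‖ ^ 2 / t)) * t ^ (-(n : ℝ) / 2) := by ring
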